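/- Let N ≥ 3, let H be a real symmetric N×N matrix, g ∈ ℝ^N, and let a > 0 and b ∈ ℝ be such that the matrix a·H + b·(g ⊗ g) is positive semidefinite. Then, with s := tr(H), one has (1/3)‖g‖²·[2·tr((s·I − H)·H²) − 2·S₂(H)·s] ≤ 2⟨(s·I − H)·H g, H g⟩ − 2·S₂(H)·⟨H g, g⟩. -/

import Mathlib

/-!
Diagonalise `H = U diag(λ) Uᵀ` and put `c = Uᵀ g`. Testing the positive semidefinite matrix
`a H + b g gᵀ` on vectors orthogonal to `g` shows that the form `∑ λᵢ xᵢ²` is nonnegative on the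
hyperplane `c ⬝ᵥ x = 0`, and the difference of the two sides of the inequality is
`2 ∑ᵢ cᵢ² σ₃(λ without λᵢ)`, with `σ₃` the third elementary symmetric function.

A form nonnegative on a hyperplane has at most one negative coefficient `λᵢ₀`; the other `λⱼ` are
nonnegative, `cⱼ = 0` whenever `λⱼ = 0`, and a test vector built from the `cⱼ / λⱼ` gives
`-λᵢ₀ ∑_{j ≠ i₀} cⱼ² / λⱼ ≤ cᵢ₀²`. Splitting `σ₃` along `λᵢ₀` and `λⱼ`, this bound absorbs the
negative part of every term `cⱼ² σ₃(λ without λⱼ)` into `cᵢ₀² σ₃(λ without λᵢ₀)`.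
-/

open Matrix Finset

noncomputable def S2 {N : ℕ} (M : Matrix (Fin N) (Fin N) ℝ) : ℝ :=
  (1 / 2) * (M.trace ^ 2 - (M * M).trace)

namespace Multiset

variable {R : Type*}

theorem esymm_zero_right [CommSemiring R] (s : Multiset R) : s.esymm 0 = 1 := by
  simp [esymm, powersetCard_zero_left]

theorem esymm_cons_succ [CommSemiring R] (a : R) (s : Multiset R) (k : ℕ) :
    (a ::ₘ s).esymm (k + 1) = s.esymm (k + 1) + a * s.esymm k := by
  simp [esymm, powersetCard_cons, map_map, sum_map_mul_left]

theorem esymm_nonneg [CommSemiring R] [PartialOrder R] [IsOrderedRing R] {s : Multiset R}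
    (hs : ∀ x ∈ s, 0 ≤ x) (k : ℕ) : 0 ≤ s.esymm k :=
  sum_nonneg fun _ ht ↦ by
    obtain ⟨t, ht', rfl⟩ := mem_map.mp ht
    exact prod_nonneg fun x hx ↦ hs x (mem_of_le (mem_powersetCard.mp ht').1 hx)

theorem esymm_one_right [CommSemiring R] (s : Multiset R) : s.esymm 1 = s.sum := by
  simp [esymm, powersetCard_one, map_map]

theorem two_mul_esymm_two [CommRing R] (s : Multiset R) :
    2 * s.esymm 2 = s.sum ^ 2 - (s.map (· ^ 2)).sum := by
  induction s using Multiset.induction with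
  | empty => simp [esymm, powersetCard_zero_right]
  | cons a s ih =>
    rw [esymm_cons_succ, esymm_one_right, sum_cons, map_cons, sum_cons]
    linear_combination ih

theorem six_mul_esymm_three [CommRing R] (s : Multiset R) :
    6 * s.esymm 3 = s.sum ^ 3 - 3 * s.sum * (s.map (· ^ 2)).sum + 2 * (s.map (· ^ 3)).sum := by
  induction s using Multiset.induction with
  | empty => simp [esymm, powersetCard_zero_right]
  | cons a s ih =>
    rw [esymm_cons_succ, sum_cons, map_cons, sum_cons, map_cons, sum_cons]
    linear_combination ih + 3 * a * two_mul_esymm_two s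

theorem esymm_three_eq_of_cons [CommRing R] (a : R) (s : Multiset R) :
    s.esymm 3 = (a ::ₘ s).esymm 3 - a * (a ::ₘ s).esymm 2 + a ^ 2 * (a ::ₘ s).esymm 1 - a ^ 3 := by
  rw [esymm_cons_succ, esymm_cons_succ, esymm_cons_succ, esymm_zero_right]
  ring

end Multiset

theorem Finset.esymm_map_val_insert {ι R : Type*} [DecidableEq ι] [CommSemiring R] (f : ι → R)
    {a : ι} {s : Finset ι} (ha : a ∉ s) (k : ℕ) :
    ((insert a s).val.map f).esymm (k + 1) =
      (s.val.map f).esymm (k + 1) + f a * (s.val.map f).esymm k := by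
  rw [insert_val_of_notMem ha, Multiset.map_cons, Multiset.esymm_cons_succ]

section DiagonalForm

variable {ι : Type*} [Fintype ι] [DecidableEq ι] {lam c : ι → ℝ}

theorem nonneg_of_coeff_eq_zero
    (h : ∀ x : ι → ℝ, c ⬝ᵥ x = 0 → 0 ≤ ∑ i, lam i * x i ^ 2) {i : ι} (hi : c i = 0) :
    0 ≤ lam i := by
  simpa [dotProduct, Pi.single_apply, hi] using h (Pi.single i 1)

theorem mul_sq_add_mul_sq_nonneg
    (h : ∀ x : ι → ℝ, c ⬝ᵥ x = 0 → 0 ≤ ∑ i, lam i * x i ^ 2) {i j : ι} (hij : i ≠ j) :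
    0 ≤ lam i * c j ^ 2 + lam j * c i ^ 2 := by
  have := h (Pi.single i (c j) - Pi.single j (c i)) (by
    simp [dotProduct, mul_sub, sum_sub_distrib, Pi.single_apply, mul_comm])
  simpa [Pi.single_apply, hij, hij.symm, sub_sq, sum_add_distrib, sum_sub_distrib, mul_add,
    mul_sub, ite_pow] using this

theorem sq_div_sum_mul_nonneg
    (h : ∀ x : ι → ℝ, c ⬝ᵥ x = 0 → 0 ≤ ∑ i, lam i * x i ^ 2) (i₀ : ι)
    (hzero : ∀ j ≠ i₀, lam j = 0 → c j = 0) :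
    0 ≤ (∑ j ∈ univ.erase i₀, c j ^ 2 / lam j) *
      (c i₀ ^ 2 + lam i₀ * ∑ j ∈ univ.erase i₀, c j ^ 2 / lam j) := by
  set S := ∑ j ∈ univ.erase i₀, c j ^ 2 / lam j
  set x := Function.update (fun j ↦ c i₀ * (c j / lam j)) i₀ (-S)
  have hx : ∀ j ∈ univ.erase i₀, x j = c i₀ * (c j / lam j) := fun j hj ↦
    Function.update_of_ne (ne_of_mem_erase hj) _ _
  have hx₀ : x i₀ = -S := Function.update_self _ _ _
  have hform : ∀ j ∈ univ.erase i₀, lam j * x j ^ 2 = c i₀ ^ 2 * (c j ^ 2 / lam j) := by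
    intro j hj
    rw [hx j hj]
    by_cases hl : lam j = 0
    · simp [hl, hzero j (ne_of_mem_erase hj) hl]
    · field_simp
  have horth : c ⬝ᵥ x = 0 := by
    rw [dotProduct, ← add_sum_erase _ _ (mem_univ i₀), hx₀, mul_neg, neg_add_eq_zero, mul_sum]
    exact sum_congr rfl fun j hj ↦ by rw [hx j hj]; ring
  have := h x horth
  rw [← add_sum_erase _ _ (mem_univ i₀), sum_congr rfl hform, ← mul_sum, hx₀] at this
  linear_combination this

theorem esymm_erase_term_nonneg {i₀ j : ι} (hj : j ≠ i₀) (hlam : ∀ i ≠ i₀, 0 ≤ lam i)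
    (hneg : lam i₀ ≤ 0) (hzero : lam j = 0 → c j = 0) (k : ℕ) :
    0 ≤ -lam i₀ * (c j ^ 2 / lam j) * ((univ.erase i₀).val.map lam).esymm (k + 1) +
      c j ^ 2 * ((univ.erase j).val.map lam).esymm (k + 1) := by
  set t := (univ.erase i₀).erase j
  have hj_erase : univ.erase i₀ = insert j t :=
    (insert_erase (mem_erase.mpr ⟨hj, mem_univ j⟩)).symm
  have hi₀_erase : univ.erase j = insert i₀ t := by
    rw [show t = (univ.erase j).erase i₀ from erase_right_comm,
      insert_erase (mem_erase.mpr ⟨hj.symm, mem_univ i₀⟩)]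
  have hi₀t : i₀ ∉ t := fun h ↦ (ne_of_mem_erase (mem_of_mem_erase h)) rfl
  have ht : 0 ≤ (t.val.map lam).esymm (k + 1) :=
    Multiset.esymm_nonneg (Multiset.forall_mem_map_iff.mpr fun i hi ↦
      hlam i (ne_of_mem_erase (mem_of_mem_erase hi))) _
  rw [hj_erase, hi₀_erase, esymm_map_val_insert _ (notMem_erase j _),
    esymm_map_val_insert _ hi₀t]
  rcases eq_or_ne (c j) 0 with hc | hc
  · simp [hc]
  have hpos : 0 < lam j := (hlam j hj).lt_of_ne fun h ↦ hc (hzero h.symm)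
  have hsplit : -lam i₀ * (c j ^ 2 / lam j) *
        ((t.val.map lam).esymm (k + 1) + lam j * (t.val.map lam).esymm k) +
      c j ^ 2 * ((t.val.map lam).esymm (k + 1) + lam i₀ * (t.val.map lam).esymm k) =
      c j ^ 2 * (1 - lam i₀ / lam j) * (t.val.map lam).esymm (k + 1) := by
    field_simp
    ring
  rw [hsplit]
  have : 0 ≤ 1 - lam i₀ / lam j := by
    have := div_nonpos_of_nonpos_of_nonneg hneg hpos.le
    linarith
  positivity

theorem sum_sq_mul_esymm_erase_nonneg
    (h : ∀ x : ι → ℝ, c ⬝ᵥ x = 0 → 0 ≤ ∑ i, lam i * x i ^ 2) (k : ℕ) :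
    0 ≤ ∑ i, c i ^ 2 * ((univ.erase i).val.map lam).esymm k := by
  by_cases hpos : ∀ i, 0 ≤ lam i
  · exact sum_nonneg fun i _ ↦ mul_nonneg (sq_nonneg _)
      (Multiset.esymm_nonneg (Multiset.forall_mem_map_iff.mpr fun i _ ↦ hpos i) k)
  push Not at hpos
  obtain ⟨i₀, hneg⟩ := hpos
  have hc₀ : c i₀ ≠ 0 := fun hc ↦ (nonneg_of_coeff_eq_zero h hc).not_gt hneg
  have hpair : ∀ j ≠ i₀, 0 ≤ lam i₀ * c j ^ 2 + lam j * c i₀ ^ 2 := fun j hj ↦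
    mul_sq_add_mul_sq_nonneg h hj.symm
  have hlam : ∀ j ≠ i₀, 0 ≤ lam j := fun j hj ↦ by
    have := hpair j hj
    have : 0 < c i₀ ^ 2 := by positivity
    nlinarith [sq_nonneg (c j)]
  have hzero : ∀ j ≠ i₀, lam j = 0 → c j = 0 := fun j hj hl ↦ by
    have := hpair j hj
    rw [hl, zero_mul, add_zero] at this
    exact pow_eq_zero_iff two_ne_zero |>.mp (by nlinarith [sq_nonneg (c j)])
  set S := ∑ j ∈ univ.erase i₀, c j ^ 2 / lam j
  have hS : 0 ≤ S := sum_nonneg fun j hj ↦ div_nonneg (sq_nonneg _) (hlam j (ne_of_mem_erase hj))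
  have hSc : -lam i₀ * S ≤ c i₀ ^ 2 := by
    rcases hS.eq_or_lt with h0 | h0
    · rw [← h0, mul_zero]
      positivity
    · have := (mul_nonneg_iff_of_pos_left h0).mp (sq_div_sum_mul_nonneg h i₀ hzero)
      linarith
  cases k with
  | zero => simp only [Multiset.esymm_zero_right, mul_one]; positivity
  | succ k =>
    set A := ((univ.erase i₀).val.map lam).esymm (k + 1)
    have hA : 0 ≤ A := Multiset.esymm_nonneg (Multiset.forall_mem_map_iff.mpr fun i hi ↦
      hlam i (ne_of_mem_erase hi)) _
    calc 0 ≤ ∑ j ∈ univ.erase i₀, (-lam i₀ * (c j ^ 2 / lam j) * A +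
          c j ^ 2 * ((univ.erase j).val.map lam).esymm (k + 1)) :=
          sum_nonneg fun j hj ↦ esymm_erase_term_nonneg (ne_of_mem_erase hj) hlam hneg.le
            (hzero j (ne_of_mem_erase hj)) k
      _ = -lam i₀ * S * A + ∑ j ∈ univ.erase i₀,
          c j ^ 2 * ((univ.erase j).val.map lam).esymm (k + 1) := by
          rw [sum_add_distrib, ← sum_mul, ← mul_sum]
      _ ≤ c i₀ ^ 2 * A + ∑ j ∈ univ.erase i₀,
          c j ^ 2 * ((univ.erase j).val.map lam).esymm (k + 1) := by gcongr
      _ = _ := add_sum_erase _ (fun i ↦ c i ^ 2 * ((univ.erase i).val.map lam).esymm (k + 1))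
          (mem_univ i₀)

end DiagonalForm

namespace Matrix

variable {n : Type*} [Fintype n]

theorem dotProduct_mulVec_nonneg_of_posSemidef_smul_add_vecMulVec {H : Matrix n n ℝ}
    {g y : n → ℝ} {a b : ℝ} (ha : 0 < a) (hpsd : (a • H + b • vecMulVec g g).PosSemidef)
    (hy : g ⬝ᵥ y = 0) : 0 ≤ y ⬝ᵥ (H *ᵥ y) := by
  have := hpsd.dotProduct_mulVec_nonneg y
  rw [add_mulVec, smul_mulVec, smul_mulVec, vecMulVec_mulVec, hy, star_trivial, dotProduct_add,
    dotProduct_smul, dotProduct_smul] at this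
  simp only [MulOpposite.op_zero, zero_smul, dotProduct_zero, smul_eq_mul] at this
  exact nonneg_of_mul_nonneg_right (by linarith) ha

theorem dotProduct_mulVec_mulVec_of_mem_unitaryGroup [DecidableEq n] {U : Matrix n n ℝ}
    (hU : U ∈ unitaryGroup n ℝ) (x y : n → ℝ) : (U *ᵥ x) ⬝ᵥ (U *ᵥ y) = x ⬝ᵥ y := by
  rw [dotProduct_comm, dotProduct_mulVec, ← mulVec_transpose, mulVec_mulVec,
    ← conjTranspose_eq_transpose_of_trivial, ← star_eq_conjTranspose,
    mem_unitaryGroup_iff'.mp hU, one_mulVec, dotProduct_comm]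

namespace IsHermitian

variable [DecidableEq n] {A : Matrix n n ℝ} (hA : A.IsHermitian)

theorem pow_eq (k : ℕ) : A ^ k =
    (hA.eigenvectorUnitary : Matrix n n ℝ) * diagonal (hA.eigenvalues ^ k) *
      star (hA.eigenvectorUnitary : Matrix n n ℝ) := by
  conv_lhs => rw [hA.spectral_theorem]
  rw [← map_pow, diagonal_pow]
  simp [RCLike.ofReal_real_eq_id]

theorem trace_pow (k : ℕ) : (A ^ k).trace = ∑ i, hA.eigenvalues i ^ k := by
  rw [hA.pow_eq, trace_mul_cycle, Unitary.coe_star_mul_self, one_mul, trace_diagonal]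
  rfl

theorem pow_mulVec (k : ℕ) (v : n → ℝ) : A ^ k *ᵥ v =
    (hA.eigenvectorUnitary : Matrix n n ℝ) *ᵥ
      fun i ↦ hA.eigenvalues i ^ k * (star (hA.eigenvectorUnitary : Matrix n n ℝ) *ᵥ v) i := by
  rw [hA.pow_eq, ← mulVec_mulVec, ← mulVec_mulVec]
  congr 1
  ext i
  exact mulVec_diagonal _ _ i

theorem pow_mulVec_dotProduct_pow_mulVec (j k : ℕ) (v : n → ℝ) :
    (A ^ j *ᵥ v) ⬝ᵥ (A ^ k *ᵥ v) = ∑ i, hA.eigenvalues i ^ (j + k) *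
      (star (hA.eigenvectorUnitary : Matrix n n ℝ) *ᵥ v) i ^ 2 := by
  rw [hA.pow_mulVec, hA.pow_mulVec,
    dotProduct_mulVec_mulVec_of_mem_unitaryGroup hA.eigenvectorUnitary.2]
  exact sum_congr rfl fun i _ ↦ by ring

theorem sum_map_eigenvalues_pow (k : ℕ) :
    ((univ.val.map hA.eigenvalues).map (· ^ k)).sum = (A ^ k).trace := by
  rw [Multiset.map_map, sum_map_val, hA.trace_pow]
  rfl

theorem esymm_eigenvalues_one : (univ.val.map hA.eigenvalues).esymm 1 = A.trace := by
  simpa [Multiset.esymm_one_right] using hA.sum_map_eigenvalues_pow 1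

theorem two_mul_esymm_eigenvalues_two :
    2 * (univ.val.map hA.eigenvalues).esymm 2 = A.trace ^ 2 - (A * A).trace := by
  rw [Multiset.two_mul_esymm_two, hA.sum_map_eigenvalues_pow 2, ← Multiset.esymm_one_right,
    hA.esymm_eigenvalues_one, sq A]

theorem six_mul_esymm_eigenvalues_three :
    6 * (univ.val.map hA.eigenvalues).esymm 3 =
      A.trace ^ 3 - 3 * A.trace * (A * A).trace + 2 * (A * (A * A)).trace := by
  rw [Multiset.six_mul_esymm_three, hA.sum_map_eigenvalues_pow 2, hA.sum_map_eigenvalues_pow 3,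
    ← Multiset.esymm_one_right, hA.esymm_eigenvalues_one, pow_succ' A 2, sq A]

theorem sum_sq_mul_esymm_three_erase_eigenvalues (v : n → ℝ) :
    ∑ i, (star (hA.eigenvectorUnitary : Matrix n n ℝ) *ᵥ v) i ^ 2 *
        ((univ.erase i).val.map hA.eigenvalues).esymm 3 =
      (univ.val.map hA.eigenvalues).esymm 3 * (v ⬝ᵥ v)
        - (univ.val.map hA.eigenvalues).esymm 2 * ((A *ᵥ v) ⬝ᵥ v)
        + (univ.val.map hA.eigenvalues).esymm 1 * ((A *ᵥ v) ⬝ᵥ (A *ᵥ v))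
        - (A *ᵥ (A *ᵥ v)) ⬝ᵥ (A *ᵥ v) := by
  have hq := hA.pow_mulVec_dotProduct_pow_mulVec
  have hq₀ := hq 0 0 v
  have hq₁ := hq 1 0 v
  have hq₂ := hq 1 1 v
  have hq₃ := hq 2 1 v
  simp only [pow_zero, pow_one, one_mulVec, sq A, ← mulVec_mulVec, zero_add, one_mul]
    at hq₀ hq₁ hq₂ hq₃
  rw [hq₀, hq₁, hq₂, hq₃, mul_sum, mul_sum, mul_sum, ← sum_sub_distrib, ← sum_add_distrib,
    ← sum_sub_distrib]
  refine sum_congr rfl fun i _ ↦ ?_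
  rw [Multiset.esymm_three_eq_of_cons (hA.eigenvalues i), ← Multiset.map_cons, erase_val,
    Multiset.cons_erase (mem_univ_val i)]
  ring

theorem sum_eigenvalues_mul_sq_nonneg_of_posSemidef {g : n → ℝ} {a b : ℝ} (ha : 0 < a)
    (hpsd : (a • A + b • vecMulVec g g).PosSemidef) (x : n → ℝ)
    (hx : (star (hA.eigenvectorUnitary : Matrix n n ℝ) *ᵥ g) ⬝ᵥ x = 0) :
    0 ≤ ∑ i, hA.eigenvalues i * x i ^ 2 := by
  have hU := hA.eigenvectorUnitary.2
  have hg :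
      g = hA.eigenvectorUnitary *ᵥ (star (hA.eigenvectorUnitary : Matrix n n ℝ) *ᵥ g) := by
    rw [mulVec_mulVec, Unitary.mul_star_self_of_mem hU, one_mulVec]
  have hx' :
      star (hA.eigenvectorUnitary : Matrix n n ℝ) *ᵥ (hA.eigenvectorUnitary *ᵥ x) = x := by
    rw [mulVec_mulVec, Unitary.star_mul_self_of_mem hU, one_mulVec]
  have hq := hA.pow_mulVec_dotProduct_pow_mulVec 0 1 (hA.eigenvectorUnitary *ᵥ x)
  rw [pow_zero, one_mulVec, pow_one, zero_add, hx'] at hq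
  have := dotProduct_mulVec_nonneg_of_posSemidef_smul_add_vecMulVec ha hpsd
    (by rwa [hg, dotProduct_mulVec_mulVec_of_mem_unitaryGroup hU])
  simpa only [hq, pow_one] using this

end IsHermitian

end Matrix

theorem matrix_inequality_of_rank_one_convexity_general {N : ℕ}
    (H : Matrix (Fin N) (Fin N) ℝ) (hH : H.IsSymm) (g : Fin N → ℝ)
    (a b : ℝ) (ha : 0 < a)
    (hpsd : (a • H + b • Matrix.vecMulVec g g).PosSemidef) :
    (1 / 3) * (g ⬝ᵥ g) *
        (2 * ((H.trace • (1 : Matrix (Fin N) (Fin N) ℝ) - H) * (H * H)).trace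
          - 2 * S2 H * H.trace)
      ≤ 2 * (((H.trace • (1 : Matrix (Fin N) (Fin N) ℝ) - H) *ᵥ (H *ᵥ g)) ⬝ᵥ (H *ᵥ g))
          - 2 * S2 H * ((H *ᵥ g) ⬝ᵥ g) := by
  have hH' : H.IsHermitian := isHermitian_iff_isSymm.mpr hH
  have hT :=
    sum_sq_mul_esymm_erase_nonneg (hH'.sum_eigenvalues_mul_sq_nonneg_of_posSemidef ha hpsd) 3
  rw [hH'.sum_sq_mul_esymm_three_erase_eigenvalues] at hT
  rw [sub_mul, smul_mul, one_mul, trace_sub, trace_smul, sub_mulVec, smul_mulVec, one_mulVec,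
    sub_dotProduct, smul_dotProduct, smul_eq_mul, smul_eq_mul, S2]
  linear_combination 2 * hT + 2 * ((H *ᵥ g) ⬝ᵥ (H *ᵥ g)) * hH'.esymm_eigenvalues_one
    - ((H *ᵥ g) ⬝ᵥ g) * hH'.two_mul_esymm_eigenvalues_two
    + (1 / 3) * (g ⬝ᵥ g) * hH'.six_mul_esymm_eigenvalues_three

/-- Let `N ≥ 3`, `H` a real symmetric `N × N` matrix, `g ∈ ℝ^N`, `a > 0`
and `b ∈ ℝ` such that `a H + b (g ⊗ g)` is positive semidefinite. Then, with `s := tr(H)`,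
`(1/3)‖g‖²[2 tr((s I − H) H²) − 2 S₂(H) s] ≤ 2⟨(s I − H) H g, H g⟩ − 2 S₂(H)⟨H g, g⟩`. -/
theorem matrix_inequality_of_rank_one_convexity {N : ℕ} (hN : 3 ≤ N)
    (H : Matrix (Fin N) (Fin N) ℝ) (hH : H.IsSymm) (g : Fin N → ℝ)
    (a b : ℝ) (ha : 0 < a)
    (hpsd : (a • H + b • Matrix.vecMulVec g g).PosSemidef) :
    (1 / 3) * (g ⬝ᵥ g) *
        (2 * ((H.trace • (1 : Matrix (Fin N) (Fin N) ℝ) - H) * (H * H)).trace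
          - 2 * S2 H * H.trace)
      ≤ 2 * (((H.trace • (1 : Matrix (Fin N) (Fin N) ℝ) - H) *ᵥ (H *ᵥ g)) ⬝ᵥ (H *ᵥ g))
          - 2 * S2 H * ((H *ᵥ g) ⬝ᵥ g) :=
  matrix_inequality_of_rank_one_convexity_general H hH g a b ha hpsd
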